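/- Let J ⊆ ℝ be an interval and f : J → (0,∞) be a convex function. Then for all a, b ∈ J and all t ∈ [0,1], with r = min{t, 1−t}, one has f((1−t)a + tb) + 2r·((f(a)+f(b))/2 − f((a+b)/2)) ≤ (1−t)f(a) + t·f(b). -/
import Mathlib

/-- If `f : J → (0, ∞)` is convex on an interval `J ⊆ ℝ`, then for
`a, b ∈ J`, `t ∈ [0,1]` and `r = min {t, 1 - t}`,
`f((1-t)a + tb) + 2r((f(a)+f(b))/2 - f((a+b)/2)) ≤ (1-t)f(a) + t f(b)`. -/
theorem stmt0 (J : Set ℝ) (hJ : Convex ℝ J) (f : ℝ → ℝ)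
    (hf : ConvexOn ℝ J f) (hfpos : ∀ x ∈ J, 0 < f x)
    (a b : ℝ) (ha : a ∈ J) (hb : b ∈ J)
    (t : ℝ) (ht : t ∈ Set.Icc (0 : ℝ) 1) (r : ℝ) (hr : r = min t (1 - t)) :
    f ((1 - t) * a + t * b) + 2 * r * ((f a + f b) / 2 - f ((a + b) / 2)) ≤
      (1 - t) * f a + t * f b := by
  obtain ⟨ht0, ht1⟩ := ht
  have hmid : (a + b) / 2 ∈ J := by
    have h2 := hJ ha hb (by norm_num : (0:ℝ) ≤ 1/2) (by norm_num : (0:ℝ) ≤ 1/2) (by norm_num)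
    simp only [smul_eq_mul] at h2
    have : (a + b) / 2 = 1/2 * a + 1/2 * b := by ring
    rw [this]; exact h2
  rcases le_total t (1 - t) with h | h
  · have hrt : r = t := by rw [hr, min_eq_left h]
    subst hrt
    have key := hf.2 ha hmid (by linarith : (0:ℝ) ≤ 1 - 2*r)
      (by linarith : (0:ℝ) ≤ 2*r) (by ring)
    simp only [smul_eq_mul] at key
    have heq : (1 - 2*r) * a + 2*r * ((a + b) / 2) = (1 - r) * a + r * b := by ring
    rw [heq] at key
    nlinarith [key]
  · have hrt : r = 1 - t := by rw [hr, min_eq_right h]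
    subst hr
    have key := hf.2 hb hmid (by simp [hrt]; linarith : (0:ℝ) ≤ 1 - 2*(min t (1-t)))
      (by simp [hrt]; linarith : (0:ℝ) ≤ 2*(min t (1-t))) (by ring)
    simp only [smul_eq_mul, hrt] at key ⊢
    have heq : (1 - 2*(1-t)) * b + 2*(1-t) * ((a + b) / 2) = (1 - t) * a + t * b := by ring
    rw [heq] at key
    nlinarith [key]
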